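/- Let Φ denote the standard normal CDF. For all x ∈ ℝ and all δ ∈ [0,1]: |Φ(δ·x/√(2−δ²)) − 1/2 − δ·x/(2√π)| ≤ (6/√(2π)) · δ³ · (|x| + |x|³). -/

import Mathlib

open MeasureTheory Filter Set

/-- The standard normal density. -/
noncomputable def stdPdf (t : ℝ) : ℝ := Real.exp (-(t ^ 2) / 2) / Real.sqrt (2 * Real.pi)

/-- The standard normal cumulative distribution function. -/
noncomputable def stdCdf (x : ℝ) : ℝ := ∫ t in Set.Iic x, stdPdf t

/-!
Write `u = δx/√(2-δ²)`. Since `Φ(u) = 1/2 + ∫₀ᵘ φ` and `|φ t - φ 0| ≤ φ 0 · t²/2`, we get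
`Φ(u) = 1/2 + u φ(0) + O(|u|³)`, with `|u| ≤ δ|x|`. The linear term `u φ(0)` differs from
`δx/(2√π) = (δx/√2) φ(0)` by at most `δ³|x| φ(0)`, because `0 ≤ 1/√(2-δ²) - 1/√2 ≤ δ²`.
-/

lemma stdPdf_eq_gaussianPDFReal : stdPdf = ProbabilityTheory.gaussianPDFReal 0 1 := by
  ext t
  simp [stdPdf, ProbabilityTheory.gaussianPDFReal, div_eq_inv_mul]

lemma integrable_stdPdf : Integrable stdPdf := by
  rw [stdPdf_eq_gaussianPDFReal]
  exact ProbabilityTheory.integrable_gaussianPDFReal 0 1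

lemma integral_stdPdf : ∫ t, stdPdf t = 1 := by
  rw [stdPdf_eq_gaussianPDFReal]
  exact ProbabilityTheory.integral_gaussianPDFReal_eq_one 0 one_ne_zero

lemma stdPdf_neg (t : ℝ) : stdPdf (-t) = stdPdf t := by simp [stdPdf]

lemma stdPdf_zero : stdPdf 0 = 1 / Real.sqrt (2 * Real.pi) := by simp [stdPdf]

lemma stdPdf_zero_nonneg : 0 ≤ stdPdf 0 := by rw [stdPdf_zero]; positivity

lemma stdCdf_zero : stdCdf 0 = 1 / 2 := by
  have h_symm : ∫ t in Iic (0 : ℝ), stdPdf t = ∫ t in Ioi (0 : ℝ), stdPdf t := by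
    rw [← neg_zero, ← integral_comp_neg_Iic]
    simp only [stdPdf_neg, neg_zero]
  have h_sum : (∫ t in Iic (0 : ℝ), stdPdf t) + ∫ t in Ioi (0 : ℝ), stdPdf t = 1 := by
    rw [← integral_stdPdf, ← setIntegral_union (Iic_disjoint_Ioi le_rfl) measurableSet_Ioi
      integrable_stdPdf.integrableOn integrable_stdPdf.integrableOn, Iic_union_Ioi,
      Measure.restrict_univ]
  rw [stdCdf]
  linarith

lemma stdCdf_eq_half_add_integral (u : ℝ) : stdCdf u = 1 / 2 + ∫ t in (0 : ℝ)..u, stdPdf t := by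
  rw [← intervalIntegral.integral_Iic_sub_Iic integrable_stdPdf.integrableOn
    integrable_stdPdf.integrableOn, ← stdCdf, ← stdCdf, stdCdf_zero]
  ring

lemma abs_stdPdf_sub_stdPdf_zero_le (t : ℝ) : |stdPdf t - stdPdf 0| ≤ stdPdf 0 / 2 * t ^ 2 := by
  have h_le_one : Real.exp (-(t ^ 2) / 2) ≤ 1 := Real.exp_le_one_iff.2 (by nlinarith)
  have h_ge : 1 - t ^ 2 / 2 ≤ Real.exp (-(t ^ 2) / 2) := by
    linarith [Real.add_one_le_exp (-(t ^ 2) / 2)]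
  have h_exp : |Real.exp (-(t ^ 2) / 2) - 1| ≤ t ^ 2 / 2 := abs_le.2 ⟨by linarith, by linarith⟩
  have h_factor : stdPdf t - stdPdf 0 = (Real.exp (-(t ^ 2) / 2) - 1) * stdPdf 0 := by
    rw [stdPdf_zero, stdPdf]; ring
  calc |stdPdf t - stdPdf 0| = |Real.exp (-(t ^ 2) / 2) - 1| * stdPdf 0 := by
        rw [h_factor, abs_mul, abs_of_nonneg stdPdf_zero_nonneg]
    _ ≤ t ^ 2 / 2 * stdPdf 0 := mul_le_mul_of_nonneg_right h_exp stdPdf_zero_nonneg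
    _ = stdPdf 0 / 2 * t ^ 2 := by ring

lemma abs_intervalIntegral_sub_mul_le {f : ℝ → ℝ} {c K u : ℝ}
    (hf : IntervalIntegrable f volume 0 u) (hfc : ∀ t, |f t - c| ≤ K * t ^ 2) :
    |(∫ t in (0 : ℝ)..u, f t) - u * c| ≤ K * |u| ^ 3 := by
  have h_bound : ∀ t ∈ uIoc (0 : ℝ) u, ‖f t - c‖ ≤ K * u ^ 2 := fun t ht => by
    have ht2 : t ^ 2 ≤ u ^ 2 := by
      rcases mem_uIoc.1 ht with h | h <;> nlinarith [h.1, h.2]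
    have hK : 0 ≤ K := by simpa using (abs_nonneg _).trans (hfc 1)
    exact (hfc t).trans (mul_le_mul_of_nonneg_left ht2 hK)
  calc |(∫ t in (0 : ℝ)..u, f t) - u * c| = ‖∫ t in (0 : ℝ)..u, (f t - c)‖ := by
        rw [intervalIntegral.integral_sub hf intervalIntegrable_const,
          intervalIntegral.integral_const, Real.norm_eq_abs, sub_zero, smul_eq_mul]
    _ ≤ K * u ^ 2 * |u - 0| := intervalIntegral.norm_integral_le_of_norm_le_const h_bound
    _ = K * |u| ^ 3 := by rw [sub_zero, ← sq_abs u]; ring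

lemma abs_stdCdf_sub_linear_le (u : ℝ) :
    |stdCdf u - 1 / 2 - u * stdPdf 0| ≤ stdPdf 0 / 2 * |u| ^ 3 := by
  rw [stdCdf_eq_half_add_integral, add_sub_cancel_left]
  exact abs_intervalIntegral_sub_mul_le integrable_stdPdf.intervalIntegrable
    abs_stdPdf_sub_stdPdf_zero_le

lemma one_le_sqrt_two_sub_sq {δ : ℝ} (hδ : δ ^ 2 ≤ 1) : 1 ≤ √(2 - δ ^ 2) :=
  Real.one_le_sqrt.2 (by linarith)

lemma abs_inv_sqrt_two_sub_sq_sub_inv_sqrt_two_le {δ : ℝ} (hδ : δ ^ 2 ≤ 1) :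
    |1 / √(2 - δ ^ 2) - 1 / √2| ≤ δ ^ 2 := by
  set s := √(2 - δ ^ 2)
  have hs1 : 1 ≤ s := one_le_sqrt_two_sub_sq hδ
  have hs2 : s ^ 2 = 2 - δ ^ 2 := Real.sq_sqrt (by linarith)
  have hr2 : √2 ^ 2 = 2 := Real.sq_sqrt zero_le_two
  have hr1 : 1 ≤ √2 := Real.one_le_sqrt.2 one_le_two
  have hsr : s ≤ √2 := Real.sqrt_le_sqrt (by nlinarith)
  -- `(√2 - s)(√2 + s) = δ²` and `√2 + s ≥ 2`, `s √2 ≥ 1`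
  have h_num : √2 - s ≤ δ ^ 2 := by nlinarith
  rw [div_sub_div _ _ (by positivity) (by positivity), one_mul, mul_one, abs_div,
    abs_of_nonneg (by linarith), abs_of_pos (by positivity), div_le_iff₀ (by positivity)]
  nlinarith [mul_nonneg (sq_nonneg δ) (by nlinarith : 0 ≤ s * √2 - 1)]

/-- Pointwise Taylor expansion with explicit remainder (proof of Lemma 1):
`|Φ(δx/√(2-δ²)) - 1/2 - δx/(2√π)| ≤ (6/√(2π)) δ³ (|x| + |x|³)` for `δ ∈ [0,1]`. -/
theorem stmt8 (x : ℝ) (δ : ℝ) (hδ : δ ∈ Set.Icc (0:ℝ) 1) :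
    |stdCdf (δ * x / Real.sqrt (2 - δ ^ 2)) - 1/2 - δ * x / (2 * Real.sqrt Real.pi)| ≤
      (6 / Real.sqrt (2 * Real.pi)) * δ ^ 3 * (|x| + |x| ^ 3) := by
  obtain ⟨hδ0, hδ1⟩ := hδ
  have hδ2 : δ ^ 2 ≤ 1 := by nlinarith
  have hs : 1 ≤ √(2 - δ ^ 2) := one_le_sqrt_two_sub_sq hδ2
  set u := δ * x / √(2 - δ ^ 2) with hu_def
  have hu : |u| ≤ δ * |x| := by
    rw [hu_def, abs_div, abs_mul, abs_of_nonneg hδ0, abs_of_pos (a := √(2 - δ ^ 2)) (by linarith)]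
    exact div_le_self (mul_nonneg hδ0 (abs_nonneg x)) hs
  have h_linear : |u - δ * x / √2| ≤ δ ^ 3 * |x| := by
    rw [hu_def, div_eq_mul_one_div, div_eq_mul_one_div (δ * x) √2, ← mul_sub, abs_mul, abs_mul,
      abs_of_nonneg hδ0]
    nlinarith [abs_inv_sqrt_two_sub_sq_sub_inv_sqrt_two_le hδ2, mul_nonneg hδ0 (abs_nonneg x)]
  have h_const : δ * x / (2 * √Real.pi) = δ * x / √2 * stdPdf 0 := by
    rw [stdPdf_zero, Real.sqrt_mul zero_le_two, div_mul_div_comm, mul_one, ← mul_assoc,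
      Real.mul_self_sqrt zero_le_two]
  have h_cubic : |u| ^ 3 ≤ δ ^ 3 * |x| ^ 3 := by
    rw [← mul_pow]; exact pow_le_pow_left₀ (abs_nonneg u) hu 3
  calc |stdCdf u - 1 / 2 - δ * x / (2 * √Real.pi)|
      = |(stdCdf u - 1 / 2 - u * stdPdf 0) + (u - δ * x / √2) * stdPdf 0| := by
        rw [h_const]; congr 1; ring
    _ ≤ |stdCdf u - 1 / 2 - u * stdPdf 0| + |u - δ * x / √2| * stdPdf 0 :=
        (abs_add_le _ _).trans_eq (by rw [abs_mul, abs_of_nonneg stdPdf_zero_nonneg])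
    _ ≤ stdPdf 0 / 2 * (δ ^ 3 * |x| ^ 3) + δ ^ 3 * |x| * stdPdf 0 := by
        have := stdPdf_zero_nonneg
        gcongr
        exact (abs_stdCdf_sub_linear_le u).trans (by gcongr)
    _ = stdPdf 0 * (δ ^ 3 * (|x| + |x| ^ 3 / 2)) := by ring
    _ ≤ stdPdf 0 * (6 * δ ^ 3 * (|x| + |x| ^ 3)) := by
        gcongr stdPdf 0 * ?_
        · exact stdPdf_zero_nonneg
        · nlinarith [pow_nonneg hδ0 3, abs_nonneg x, pow_nonneg (abs_nonneg x) 3]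
    _ = _ := by rw [stdPdf_zero]; ring
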